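/- A graph G is r-regular and totally silver if and only if V(G) can be partitioned into r+1 independent sets C_0, C_1, ..., C_r such that for all distinct i, j, the subgraph induced by G on C_i ∪ C_j is 1-regular (a perfect matching between C_i and C_j). -/

import Mathlib

/-!
A totally silver coloring `c` is exactly a proper coloring in which every vertex `u` has, for
each color `i ≠ c u`, exactly one neighbor of color `i`: the vertex itself takes care of its own
color in `N[u]`, which forces all neighbors to avoid it. On the color classes, the second
condition says that any two classes induce a perfect matching.
Regularity comes for free, since `c` maps `N[v]` bijectively onto the `r + 1` colors.
-/

/-- A totally silver coloring: each of the `k` colors appears exactly once on every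
closed neighborhood `N[v]`. -/
def IsTotallySilver {V : Type*} {k : ℕ} (G : SimpleGraph V) (c : V → Fin k) : Prop :=
  ∀ v : V, ∀ i : Fin k, ∃! w : V, (w = v ∨ G.Adj v w) ∧ c w = i

theorem Set.exists_eq_preimage_singleton_of_existsUnique_mem {α ι : Type*} {C : ι → Set α}
    (hC : ∀ a, ∃! i, a ∈ C i) : ∃ c : α → ι, C = fun i => c ⁻¹' {i} := by
  choose c hc huniq using hC
  exact ⟨c, funext fun i => Set.ext fun a => ⟨fun h => (huniq a i h).symm, fun h => h ▸ hc a⟩⟩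

namespace IsTotallySilver

variable {V : Type*} {k : ℕ} {G : SimpleGraph V} {c : V → Fin k}

theorem ne_of_adj (hc : IsTotallySilver G c) {u v : V} (huv : G.Adj u v) : c u ≠ c v := by
  intro hcol
  obtain ⟨w, -, huniq⟩ := hc u (c u)
  exact G.ne_of_adj huv <|
    (huniq u ⟨Or.inl rfl, rfl⟩).trans (huniq v ⟨Or.inr huv, hcol.symm⟩).symm

theorem existsUnique_adj (hc : IsTotallySilver G c) {u : V} {i : Fin k} (hi : c u ≠ i) :
    ∃! w, G.Adj u w ∧ c w = i := by
  obtain ⟨w, ⟨rfl | hadj, hw⟩, huniq⟩ := hc u i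
  · exact absurd hw hi
  · exact ⟨w, ⟨hadj, hw⟩, fun y hy => huniq y ⟨Or.inr hy.1, hy.2⟩⟩

theorem degree_add_one [Fintype V] [DecidableRel G.Adj]
    (hc : IsTotallySilver G c) (v : V) : G.degree v + 1 = k := by
  classical
  have hmem : ∀ w, w ∈ insert v (G.neighborFinset v) ↔ w = v ∨ G.Adj v w := by simp
  rw [← G.card_neighborFinset_eq_degree,
    ← Finset.card_insert_of_notMem (G.notMem_neighborFinset_self v),
    ← Fintype.card_fin k, ← Finset.card_univ]
  refine Finset.card_bij (fun w _ => c w) (fun _ _ => Finset.mem_univ _) ?_ ?_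
  · intro a ha b hb hab
    obtain ⟨w, -, huniq⟩ := hc v (c a)
    exact (huniq a ⟨(hmem a).1 ha, rfl⟩).trans (huniq b ⟨(hmem b).1 hb, hab.symm⟩).symm
  · intro i _
    obtain ⟨w, ⟨hw, hwi⟩, -⟩ := hc v i
    exact ⟨w, (hmem w).2 hw, hwi⟩

end IsTotallySilver

theorem IsTotallySilver.isRegularOfDegree {V : Type*} [Fintype V] {G : SimpleGraph V}
    [DecidableRel G.Adj] {r : ℕ} {c : V → Fin (r + 1)} (hc : IsTotallySilver G c) : G.IsRegularOfDegree r :=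
  fun v => Nat.succ_injective (hc.degree_add_one v)

section

variable {V : Type*} {k : ℕ} {G : SimpleGraph V} {c : V → Fin k}

theorem isTotallySilver_iff :
    IsTotallySilver G c ↔
      (∀ u v, G.Adj u v → c u ≠ c v) ∧ ∀ u i, c u ≠ i → ∃! w, G.Adj u w ∧ c w = i := by
  refine ⟨fun hc => ⟨fun _ _ => hc.ne_of_adj, fun _ _ => hc.existsUnique_adj⟩, ?_⟩
  rintro ⟨hproper, hnbr⟩ v i
  by_cases hvi : c v = i
  · refine ⟨v, ⟨Or.inl rfl, hvi⟩, ?_⟩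
    rintro y ⟨rfl | hadj, hy⟩
    · rfl
    · exact absurd (hvi.trans hy.symm) (hproper v y hadj)
  · obtain ⟨w, hw, huniq⟩ := hnbr v i hvi
    refine ⟨w, ⟨Or.inr hw.1, hw.2⟩, ?_⟩
    rintro y ⟨rfl | hadj, hy⟩
    · exact absurd hy hvi
    · exact huniq y ⟨hadj, hy⟩

theorem matching_fibers_iff (hproper : ∀ u v, G.Adj u v → c u ≠ c v) :
    (∀ u i, c u ≠ i → ∃! w, G.Adj u w ∧ c w = i) ↔
      ∀ i j, i ≠ j → ∀ u ∈ c ⁻¹' {i} ∪ c ⁻¹' {j},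
        ∃! w, w ∈ c ⁻¹' {i} ∪ c ⁻¹' {j} ∧ G.Adj u w := by
  simp only [Set.mem_union, Set.mem_preimage, Set.mem_singleton_iff]
  constructor
  · intro hnbr i j hij u hu
    have hpair : ∀ {a b}, a ≠ b → c u = a → ∃! w, (c w = a ∨ c w = b) ∧ G.Adj u w := by
      rintro a b hab rfl
      obtain ⟨w, ⟨hadj, hwb⟩, huniq⟩ := hnbr u b hab
      refine ⟨w, ⟨Or.inr hwb, hadj⟩, fun y ⟨hy, hadj'⟩ => huniq y ⟨hadj', ?_⟩⟩
      exact hy.resolve_left fun h => hproper u y hadj' h.symm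
    rcases hu with hu | hu
    · exact hpair hij hu
    · simpa only [or_comm] using hpair hij.symm hu
  · intro hmatch u i hi
    obtain ⟨w, ⟨hw, hadj⟩, huniq⟩ := hmatch (c u) i hi u (Or.inl rfl)
    have hwi : c w = i := hw.resolve_left fun h => hproper u w hadj h.symm
    exact ⟨w, ⟨hadj, hwi⟩, fun y hy => huniq y ⟨Or.inr hy.2, hy.1⟩⟩

theorem isTotallySilver_iff_fibers :
    IsTotallySilver G c ↔
      (∀ i, ∀ u ∈ c ⁻¹' {i}, ∀ v ∈ c ⁻¹' {i}, ¬ G.Adj u v) ∧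
      (∀ i j, i ≠ j → ∀ u ∈ c ⁻¹' {i} ∪ c ⁻¹' {j},
        ∃! w, w ∈ c ⁻¹' {i} ∪ c ⁻¹' {j} ∧ G.Adj u w) := by
  have hproper : (∀ i, ∀ u ∈ c ⁻¹' {i}, ∀ v ∈ c ⁻¹' {i}, ¬ G.Adj u v) ↔
      ∀ u v, G.Adj u v → c u ≠ c v := by
    simp only [Set.mem_preimage, Set.mem_singleton_iff]
    exact ⟨fun h u v huv hcol => h _ u rfl v hcol.symm huv,
      fun h i u hu v hv huv => h u v huv (hu.trans hv.symm)⟩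
  rw [isTotallySilver_iff, hproper]
  exact and_congr_right matching_fibers_iff

end

theorem stmt_7 {V : Type*} [Fintype V] (G : SimpleGraph V) [DecidableRel G.Adj] (r : ℕ) :
    (G.IsRegularOfDegree r ∧ ∃ c : V → Fin (r + 1), IsTotallySilver G c) ↔
    ∃ C : Fin (r + 1) → Set V,
      (∀ v, ∃! i, v ∈ C i) ∧
      (∀ i, ∀ u ∈ C i, ∀ v ∈ C i, ¬ G.Adj u v) ∧
      (∀ i j, i ≠ j → ∀ u ∈ C i ∪ C j, ∃! w, w ∈ C i ∪ C j ∧ G.Adj u w) := by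
  constructor
  · rintro ⟨-, c, hc⟩
    exact ⟨fun i => c ⁻¹' {i}, fun v => existsUnique_eq', isTotallySilver_iff_fibers.1 hc⟩
  · rintro ⟨C, hpart, hC⟩
    obtain ⟨c, rfl⟩ := Set.exists_eq_preimage_singleton_of_existsUnique_mem hpart
    have hc := isTotallySilver_iff_fibers.2 hC
    exact ⟨hc.isRegularOfDegree, c, hc⟩
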